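/- arXiv:2503.08800 — 11 statements merged into one kernel-verified Lean document; each statement's English description precedes it below -/
import Mathlib

section
/- There are exactly 5 quadruples (x1, x2, y1, y2) of positive integers satisfying x1*y1 = x2 + 1 and x2*y2 = x1 + 1, namely (1,1,2,2), (1,2,3,1), (2,1,1,3), (2,3,2,1), and (3,2,1,2). -/
/-!
The system is invariant under `(x₁, x₂, y₁, y₂) ↦ (x₂, x₁, y₂, y₁)`, so it suffices to bound `y₁`.
If `x₂ < x₁`, then `x₁ * y₁ = x₂ + 1 ≤ x₁` forces `y₁ = 1`. If `x₁ = x₂`, then `x₁ * y₁ = x₁ + 1`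
forces `y₁ = 2`. If `x₁ < x₂`, the second equation forces `y₂ = 1`, so `x₂ = x₁ + 1` and
`x₁ * y₁ = x₁ + 2`, whence `y₁ ≤ 3`. With `1 ≤ y₁, y₂ ≤ 3` each equation is linear in the `xᵢ`,
and the finitely many cases are checked directly.
-/

namespace A2Frieze

theorem eq_one_of_mul_eq_succ_of_lt {a b c : ℕ} (h : a * b = c + 1) (hlt : c < a) : b = 1 := by
  rcases b with _ | _ | b <;> nlinarith

theorem le_succ_of_mul_eq_add {a b k : ℕ} (hk : 0 < k) (h : a * b = a + k) : b ≤ k + 1 := by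
  have ha : 0 < a := Nat.pos_of_ne_zero fun ha => by simp [ha] at h; omega
  by_contra! hb
  nlinarith [Nat.mul_le_mul_left a hb]

variable {x₁ x₂ y₁ y₂ : ℕ}

theorem y₁_le_three (h₁ : x₁ * y₁ = x₂ + 1) (h₂ : x₂ * y₂ = x₁ + 1) : y₁ ≤ 3 := by
  rcases lt_trichotomy x₁ x₂ with hlt | rfl | hgt
  · obtain rfl : y₂ = 1 := eq_one_of_mul_eq_succ_of_lt h₂ hlt
    exact le_succ_of_mul_eq_add (a := x₁) two_pos (by omega)
  · exact (le_succ_of_mul_eq_add one_pos h₁).trans (by norm_num)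
  · exact (eq_one_of_mul_eq_succ_of_lt h₁ hgt).trans_le (by norm_num)

end A2Frieze

theorem stmt1 :
    {p : ℕ × ℕ × ℕ × ℕ | 0 < p.1 ∧ 0 < p.2.1 ∧ 0 < p.2.2.1 ∧ 0 < p.2.2.2 ∧
      p.1 * p.2.2.1 = p.2.1 + 1 ∧ p.2.1 * p.2.2.2 = p.1 + 1} =
    {(1, 1, 2, 2), (1, 2, 3, 1), (2, 1, 1, 3), (2, 3, 2, 1), (3, 2, 1, 2)} := by
  ext ⟨x₁, x₂, y₁, y₂⟩
  simp only [Set.mem_ofPred_eq, Set.mem_insert_iff, Set.mem_singleton_iff, Prod.mk.injEq]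
  constructor
  · rintro ⟨-, -, hy₁, hy₂, h₁, h₂⟩
    have hy₁_le := A2Frieze.y₁_le_three h₁ h₂
    have hy₂_le := A2Frieze.y₁_le_three h₂ h₁
    interval_cases y₁ <;> interval_cases y₂ <;> omega
  · rintro (⟨rfl, rfl, rfl, rfl⟩ | ⟨rfl, rfl, rfl, rfl⟩ | ⟨rfl, rfl, rfl, rfl⟩ |
      ⟨rfl, rfl, rfl, rfl⟩ | ⟨rfl, rfl, rfl, rfl⟩) <;> norm_num
end

section
/- There are exactly 6 triples (x, y, z) of positive integers satisfying x*y*z = x^2 + y + 1. -/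
/-! Since `x` divides `x * y * z - x ^ 2 = y + 1`, write `y + 1 = x * m`; dividing the equation by `x`
gives `y * z = x + m`, i.e. `(x * m - 1) * z = x + m`, which is symmetric in `x` and `m`.
Comparing sizes (`z = 1` forces `(x - 1) * (m - 1) = 2`, while `z ≥ 2` forces `2 * (x * m - 1) ≤ x + m`)
shows `x, m ≤ 3`, which confines the solutions to a small box that is searched exhaustively. -/

namespace CubicSurface

theorem dvd_add_one_of_mul_mul_eq {x y z : ℕ} (h : x * y * z = x ^ 2 + y + 1) : x ∣ y + 1 :=
  (Nat.dvd_add_right (dvd_pow_self x two_ne_zero)).mp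
    (by rw [← add_assoc, ← h, mul_assoc]; exact dvd_mul_right x _)

theorem mul_eq_add_of_mul_mul_eq {x y z m : ℕ} (hx : 0 < x) (hm : y + 1 = x * m)
    (h : x * y * z = x ^ 2 + y + 1) : y * z = x + m :=
  Nat.eq_of_mul_eq_mul_left hx (by rw [← mul_assoc, h, add_assoc, hm]; ring)

theorem le_three_of_mul_eq_add {x y z m : ℕ} (hz : 0 < z) (hm : 0 < m)
    (hym : y + 1 = x * m) (h : y * z = x + m) : x ≤ 3 := by
  rcases Nat.lt_or_ge z 2 with hz1 | hz2
  · obtain rfl : z = 1 := by omega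
    have hm2 : 2 ≤ m := by
      by_contra! hm1
      obtain rfl : m = 1 := by omega
      omega
    nlinarith
  · nlinarith

theorem solution_bounds {x y z : ℕ} (hx : 0 < x) (hy : 0 < y) (hz : 0 < z)
    (h : x * y * z = x ^ 2 + y + 1) : x ≤ 3 ∧ y ≤ 8 ∧ z ≤ 6 := by
  obtain ⟨m, hym⟩ := dvd_add_one_of_mul_mul_eq h
  have hm : 0 < m := Nat.pos_of_ne_zero (by rintro rfl; omega)
  have hyz := mul_eq_add_of_mul_mul_eq hx hym h
  have hx3 := le_three_of_mul_eq_add hz hm hym hyz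
  have hm3 := le_three_of_mul_eq_add hz hx (hym.trans (mul_comm x m)) (hyz.trans (add_comm x m))
  refine ⟨hx3, ?_, ?_⟩
  · nlinarith
  · nlinarith

end CubicSurface

open CubicSurface in
theorem stmt3 :
    {p : ℕ × ℕ × ℕ | 0 < p.1 ∧ 0 < p.2.1 ∧ 0 < p.2.2 ∧
      p.1 * p.2.1 * p.2.2 = p.1 ^ 2 + p.2.1 + 1}.ncard = 6 := by
  have hbox : {p : ℕ × ℕ × ℕ | 0 < p.1 ∧ 0 < p.2.1 ∧ 0 < p.2.2 ∧
      p.1 * p.2.1 * p.2.2 = p.1 ^ 2 + p.2.1 + 1} =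
      ↑((Finset.Icc 1 3 ×ˢ Finset.Icc 1 8 ×ˢ Finset.Icc 1 6).filter
        fun p : ℕ × ℕ × ℕ => p.1 * p.2.1 * p.2.2 = p.1 ^ 2 + p.2.1 + 1) := by
    ext ⟨x, y, z⟩
    simp only [Set.mem_ofPred_eq, Finset.coe_filter, Finset.mem_product, Finset.mem_Icc]
    constructor
    · rintro ⟨hx, hy, hz, h⟩
      obtain ⟨hx3, hy8, hz6⟩ := solution_bounds hx hy hz h
      omega
    · rintro ⟨⟨⟨hx, -⟩, ⟨hy, -⟩, ⟨hz, -⟩⟩, h⟩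
      exact ⟨hx, hy, hz, h⟩
  rw [hbox, Set.ncard_coe_finset]
  decide
end

section
/- There are exactly 9 triples (x, y, z) of positive integers satisfying x*y*z = x^3 + y + 1. -/
/-!
With `b = y z - x²` (so that `x b = y + 1`) and `s = b z - x`, a positive solution yields positive
integers satisfying the symmetric system `x + s = b z`, `x s = b + z`. Any such quadruple obeys
`(x - 1)(s - 1) + (b - 1)(z - 1) = 2`, which forces `x ≤ 5` and `z ≤ 5`; for fixed `x` and `z`
the equation is linear in `y`.
-/

theorem sub_one_mul_sub_one_add_sub_one_mul_sub_one_eq_two {R : Type*} [CommRing R]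
    {a b c d : R} (hsum : a + b = c * d) (hprod : a * b = c + d) :
    (a - 1) * (b - 1) + (c - 1) * (d - 1) = 2 := by
  linear_combination hprod - hsum

theorem le_five_of_add_eq_mul_of_mul_eq_add {a b c d : ℤ} (hb : 0 < b)
    (hc : 0 < c) (hd : 0 < d) (hsum : a + b = c * d) (hprod : a * b = c + d) : a ≤ 5 := by
  have key := sub_one_mul_sub_one_add_sub_one_mul_sub_one_eq_two hsum hprod
  rcases (show b = 1 ∨ 2 ≤ b by omega) with rfl | hb2
  · have hc2 : 2 ≤ c := by nlinarith
    have hd2 : 2 ≤ d := by nlinarith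
    nlinarith [mul_nonneg (by omega : (0 : ℤ) ≤ c - 2) (by omega : (0 : ℤ) ≤ d - 2)]
  · nlinarith [mul_nonneg (by omega : (0 : ℤ) ≤ c - 1) (by omega : (0 : ℤ) ≤ d - 1)]

theorem exists_mul_eq_add_of_mul_mul_eq {x y z : ℤ} (hx : 0 < x) (hy : 0 < y) (hz : 0 < z)
    (h : x * y * z = x ^ 3 + y + 1) :
    ∃ b s : ℤ, 0 < b ∧ 0 < s ∧ x + s = b * z ∧ x * s = b + z := by
  obtain ⟨b, hb⟩ : ∃ b, b = y * z - x ^ 2 := ⟨_, rfl⟩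
  have hxb : x * b = y + 1 := by linear_combination x * hb + h
  have hb0 : 0 < b := by nlinarith
  refine ⟨b, b * z - x, hb0, by nlinarith, by ring, ?_⟩
  linear_combination z * hxb - hb

theorem le_five_of_mul_mul_eq {x y z : ℕ} (hx : 0 < x) (hy : 0 < y) (hz : 0 < z)
    (h : x * y * z = x ^ 3 + y + 1) : x ≤ 5 ∧ z ≤ 5 := by
  obtain ⟨b, s, hb, hs, hsum, hprod⟩ := exists_mul_eq_add_of_mul_mul_eq (x := x) (y := y)
    (z := z) (by omega) (by omega) (by omega) (by exact_mod_cast h)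
  have hx5 := le_five_of_add_eq_mul_of_mul_eq_add hs hb (by omega) hsum hprod
  -- the system is symmetric under `(x, s) ↔ (b, z)`
  have hz5 := le_five_of_add_eq_mul_of_mul_eq_add (a := (z : ℤ)) (c := x) hb
    (by omega) hs (by linear_combination -hprod) (by linear_combination -hsum)
  omega

theorem stmt4 :
    {p : ℕ × ℕ × ℕ | 0 < p.1 ∧ 0 < p.2.1 ∧ 0 < p.2.2 ∧
      p.1 * p.2.1 * p.2.2 = p.1 ^ 3 + p.2.1 + 1}.ncard = 9 := by
  have hsol : {p : ℕ × ℕ × ℕ | 0 < p.1 ∧ 0 < p.2.1 ∧ 0 < p.2.2 ∧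
      p.1 * p.2.1 * p.2.2 = p.1 ^ 3 + p.2.1 + 1} =
      ({(1, 2, 2), (1, 1, 3), (2, 9, 1), (2, 3, 2), (2, 1, 5), (3, 14, 1), (3, 2, 5),
        (5, 14, 2), (5, 9, 3)} : Finset (ℕ × ℕ × ℕ)) := by
    ext ⟨x, y, z⟩
    simp only [Set.mem_ofPred_eq, Finset.coe_insert, Finset.coe_singleton, Set.mem_insert_iff,
      Set.mem_singleton_iff, Prod.mk.injEq]
    constructor
    · rintro ⟨hx, hy, hz, h⟩
      obtain ⟨hx5, hz5⟩ := le_five_of_mul_mul_eq hx hy hz h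
      interval_cases x <;> interval_cases z <;> omega
    · rintro (h | h | h | h | h | h | h | h | h) <;> obtain ⟨rfl, rfl, rfl⟩ := h <;> norm_num
  rw [hsol, Set.ncard_coe_finset]
  rfl
end

section
/- There are exactly 14 six-tuples (x1, x2, x3, y1, y2, y3) of positive integers satisfying x1*y1 = x2 + 1, x2*y2 = x1 + x3, and x3*y3 = x2 + 1. -/
/-!
If some `yᵢ = 1`, eliminating it leaves two of the `xⱼ`, say `a` and `b`, with `a ∣ b + 1` and
`b ∣ a + 1` (a frieze of type A₂), which forces `a + b ≤ 5`. If instead every `yᵢ ≥ 2`, then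
`2 x₁, 2 x₃ ≤ x₂ + 1` and `2 x₂ ≤ x₁ + x₃`, so `x₂ = 1`. Either way `x₂ ≤ 5`, which bounds all six
variables, and the solutions in the resulting box are counted by evaluation.
-/

lemma dvd_of_mul_eq_self_add {x y n : ℕ} (h : x * y = x + n) : x ∣ n :=
  (Nat.dvd_add_right (dvd_refl x)).mp (Dvd.intro y h)

lemma add_le_five_of_dvd_add_one {a b : ℕ} (hab : a ∣ b + 1) (hba : b ∣ a + 1) : a + b ≤ 5 := by
  wlog hle : a ≤ b generalizing a b
  · exact (add_comm a b).trans_le (this hba hab (by omega))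
  rcases hle.eq_or_lt with rfl | hlt
  · have := Nat.le_of_dvd one_pos ((Nat.dvd_add_right (dvd_refl a)).mp hab)
    omega
  · obtain rfl : a + 1 = b := Nat.eq_of_dvd_of_lt_two_mul (by omega) hba (by omega)
    have := Nat.le_of_dvd two_pos ((Nat.dvd_add_right (dvd_refl a)).mp hab)
    omega

lemma a3Frieze_x₂_le_five {x₁ x₂ x₃ y₁ y₂ y₃ : ℕ} (h₁ : x₁ * y₁ = x₂ + 1)
    (h₂ : x₂ * y₂ = x₁ + x₃) (h₃ : x₃ * y₃ = x₂ + 1) : x₂ ≤ 5 := by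
  have hx₁ : x₁ ∣ x₂ + 1 := Dvd.intro y₁ h₁
  have hx₃ : x₃ ∣ x₂ + 1 := Dvd.intro y₃ h₃
  obtain rfl | hy₁ := eq_or_ne y₁ 1
  · have : x₂ ∣ x₃ + 1 := dvd_of_mul_eq_self_add (y := y₂) (by linarith)
    have := add_le_five_of_dvd_add_one this hx₃
    omega
  obtain rfl | hy₃ := eq_or_ne y₃ 1
  · have : x₂ ∣ x₁ + 1 := dvd_of_mul_eq_self_add (y := y₂) (by linarith)
    have := add_le_five_of_dvd_add_one this hx₁
    omega
  obtain rfl | hy₂ := eq_or_ne y₂ 1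
  · have h₁₃ : x₁ ∣ x₃ + 1 := dvd_of_mul_eq_self_add (y := y₁) (by linarith)
    have h₃₁ : x₃ ∣ x₁ + 1 := dvd_of_mul_eq_self_add (y := y₃) (by linarith)
    have := add_le_five_of_dvd_add_one h₁₃ h₃₁
    omega
  have hy₁₀ : y₁ ≠ 0 := by rintro rfl; simp at h₁
  have hy₃₀ : y₃ ≠ 0 := by rintro rfl; simp at h₃
  have hy₂₀ : y₂ ≠ 0 := by
    rintro rfl
    obtain rfl : x₁ = 0 := by omega
    simp at h₁
  have := Nat.mul_le_mul_left x₁ (show 2 ≤ y₁ by omega)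
  have := Nat.mul_le_mul_left x₂ (show 2 ≤ y₂ by omega)
  have := Nat.mul_le_mul_left x₃ (show 2 ≤ y₃ by omega)
  omega

theorem stmt6 :
    {p : ℕ × ℕ × ℕ × ℕ × ℕ × ℕ |
      0 < p.1 ∧ 0 < p.2.1 ∧ 0 < p.2.2.1 ∧ 0 < p.2.2.2.1 ∧ 0 < p.2.2.2.2.1 ∧ 0 < p.2.2.2.2.2 ∧
      p.1 * p.2.2.2.1 = p.2.1 + 1 ∧
      p.2.1 * p.2.2.2.2.1 = p.1 + p.2.2.1 ∧
      p.2.2.1 * p.2.2.2.2.2 = p.2.1 + 1}.ncard = 14 := by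
  have hcount : ((Finset.Icc 1 6 ×ˢ Finset.Icc 1 5 ×ˢ Finset.Icc 1 6 ×ˢ Finset.Icc 1 6 ×ˢ
      Finset.Icc 1 4 ×ˢ Finset.Icc 1 6).filter fun p =>
        p.1 * p.2.2.2.1 = p.2.1 + 1 ∧
        p.2.1 * p.2.2.2.2.1 = p.1 + p.2.2.1 ∧
        p.2.2.1 * p.2.2.2.2.2 = p.2.1 + 1).card = 14 := by
    decide +kernel
  rw [← hcount, ← Set.ncard_coe_finset]
  refine congrArg Set.ncard (Set.ext fun ⟨x₁, x₂, x₃, y₁, y₂, y₃⟩ => ?_)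
  simp only [Set.mem_ofPred_eq, Finset.coe_filter, Finset.mem_product, Finset.mem_Icc]
  constructor
  · rintro ⟨hx₁, hx₂, hx₃, hy₁, hy₂, hy₃, h₁, h₂, h₃⟩
    have := a3Frieze_x₂_le_five h₁ h₂ h₃
    refine ⟨⟨⟨hx₁, ?_⟩, ⟨hx₂, this⟩, ⟨hx₃, ?_⟩, ⟨hy₁, ?_⟩, ⟨hy₂, ?_⟩, ⟨hy₃, ?_⟩⟩, h₁, h₂, h₃⟩ <;>
      nlinarith
  · rintro ⟨⟨⟨hx₁, -⟩, ⟨hx₂, -⟩, ⟨hx₃, -⟩, ⟨hy₁, -⟩, ⟨hy₂, -⟩, ⟨hy₃, -⟩⟩, h⟩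
    exact ⟨hx₁, hx₂, hx₃, hy₁, hy₂, hy₃, h⟩
end

section
/- Let m, n be positive integers. If (m*x - 1)*(n*x - 1) = x + 1 for some positive integer x, then x = (m + n + 1)/(m*n); in particular m*n divides m + n + 1 and m, n ∈ {1, 2, 3}. -/
/-! Expanding, the equation reads `x * (m * n * x - (m + n + 1)) = 0`, so `m * n * x = m + n + 1`.
Hence `m * n ≤ m + n + 1`, i.e. `(m - 1) * (n - 1) ≤ 2`, which bounds `m` once `n ≥ 2`;
for `n = 1` the relation `m * x = m + 2` forces `m ≤ 2`. -/

theorem mul_eq_add_add_one_of_mul_sub_one_mul_sub_one {R : Type*} [CommRing R] [NoZeroDivisors R]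
    {m n x : R} (hx : x ≠ 0) (h : (m * x - 1) * (n * x - 1) = x + 1) :
    m * n * x = m + n + 1 := by
  have hfactor : x * (m * n * x - (m + n + 1)) = 0 := by linear_combination h
  exact sub_eq_zero.1 ((mul_eq_zero.1 hfactor).resolve_left hx)

theorem mem_one_two_three_of_mul_dvd_add_add_one {m n : ℕ} (h : m * n ∣ m + n + 1) :
    m ∈ ({1, 2, 3} : Set ℕ) := by
  obtain ⟨k, hk⟩ := h
  have hm : m ≠ 0 := by rintro rfl; simp at hk
  have hn : n ≠ 0 := by rintro rfl; simp at hk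
  have hk0 : k ≠ 0 := by rintro rfl; simp at hk
  suffices m ≤ 3 by simp only [Set.mem_insert_iff, Set.mem_singleton_iff]; omega
  by_contra! hm4
  obtain rfl | hn2 : n = 1 ∨ 2 ≤ n := by omega
  · obtain rfl | hk2 : k = 1 ∨ 2 ≤ k := by omega
    · omega
    · nlinarith
  · have hmn : m * n ≤ m * n * k := Nat.le_mul_of_pos_right _ (Nat.pos_of_ne_zero hk0)
    nlinarith

theorem stmt9_general (m n x : ℕ) (hx : 0 < x)
    (h : ((m : ℤ) * x - 1) * ((n : ℤ) * x - 1) = (x : ℤ) + 1) :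
    m * n * x = m + n + 1 ∧ m * n ∣ m + n + 1 ∧
      m ∈ ({1, 2, 3} : Set ℕ) ∧ n ∈ ({1, 2, 3} : Set ℕ) := by
  have key : m * n * x = m + n + 1 := by
    exact_mod_cast mul_eq_add_add_one_of_mul_sub_one_mul_sub_one (by positivity) h
  have hdvd : m * n ∣ m + n + 1 := Dvd.intro x key
  refine ⟨key, hdvd, mem_one_two_three_of_mul_dvd_add_add_one hdvd,
    mem_one_two_three_of_mul_dvd_add_add_one (m := n) (n := m) ?_⟩
  rwa [mul_comm, add_comm n]

theorem stmt9 (m n x : ℕ) (hm : 0 < m) (hn : 0 < n) (hx : 0 < x)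
    (h : ((m : ℤ) * x - 1) * ((n : ℤ) * x - 1) = (x : ℤ) + 1) :
    m * n * x = m + n + 1 ∧ m * n ∣ m + n + 1 ∧
      m ∈ ({1, 2, 3} : Set ℕ) ∧ n ∈ ({1, 2, 3} : Set ℕ) :=
  stmt9_general m n x hx h
end

section
/- Writing the G2-frieze equations as x1*y1 = x2 + 1 and x2*y2 = x1^3 + 1, there is a bijection between positive integer solutions (x,y,z) of x*y*z = x^3 + y + 1 and positive integer solutions (x1, x2, y1, y2) of the G2-frieze equations, given by x1 = x, x2 = (x^3+1)/y, y1 = z, y2 = y. -/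
theorem stmt11 :
    ∃ e : {p : ℕ × ℕ × ℕ × ℕ // 0 < p.1 ∧ 0 < p.2.1 ∧ 0 < p.2.2.1 ∧ 0 < p.2.2.2 ∧
        p.1 * p.2.2.1 = p.2.1 + 1 ∧ p.2.1 * p.2.2.2 = p.1 ^ 3 + 1} ≃
      {q : ℕ × ℕ × ℕ // 0 < q.1 ∧ 0 < q.2.1 ∧ 0 < q.2.2 ∧
        q.1 * q.2.1 * q.2.2 = q.1 ^ 3 + q.2.1 + 1},
      ∀ p, ((e p : ℕ × ℕ × ℕ)) = ((p : ℕ × ℕ × ℕ × ℕ).1,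
        (p : ℕ × ℕ × ℕ × ℕ).2.2.2, (p : ℕ × ℕ × ℕ × ℕ).2.2.1) := by
  refine ⟨⟨fun p => ⟨(p.1.1, p.1.2.2.2, p.1.2.2.1), ?_⟩,
    fun q => ⟨(q.1.1, q.1.1 * q.1.2.2 - 1, q.1.2.2, q.1.2.1), ?_⟩, ?_, ?_⟩, fun p => rfl⟩
  · obtain ⟨⟨x1, x2, y1, y2⟩, h1, h2, h3, h4, h5, h6⟩ := p
    replace h1 : 0 < x1 := h1
    replace h3 : 0 < y1 := h3
    replace h4 : 0 < y2 := h4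
    replace h5 : x1 * y1 = x2 + 1 := h5
    replace h6 : x2 * y2 = x1 ^ 3 + 1 := h6
    refine ⟨h1, h4, h3, ?_⟩
    show x1 * y2 * y1 = x1 ^ 3 + y2 + 1
    calc x1 * y2 * y1 = x1 * y1 * y2 := by ring
    _ = (x2 + 1) * y2 := by rw [h5]
    _ = x1 ^ 3 + y2 + 1 := by rw [add_mul, h6]; ring
  · obtain ⟨⟨x, y, z⟩, h1, h2, h3, h4⟩ := q
    replace h1 : 0 < x := h1
    replace h2 : 0 < y := h2
    replace h3 : 0 < z := h3
    replace h4 : x * y * z = x ^ 3 + y + 1 := h4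
    have hxz : 2 ≤ x * z := by
      by_contra h
      push_neg at h
      have hle : x * y * z ≤ y := by
        calc x * y * z = (x * z) * y := by ring
        _ ≤ 1 * y := Nat.mul_le_mul_right _ (by omega)
        _ = y := one_mul y
      omega
    refine ⟨h1, ?_, h3, h2, ?_, ?_⟩
    · show 0 < x * z - 1; omega
    · show x * z = (x * z - 1) + 1; omega
    · show (x * z - 1) * y = x ^ 3 + 1
      have key : (x * z - 1) * y + y = x * y * z := by
        have : (x * z - 1) * y + 1 * y = (x * z) * y := by
          rw [← Nat.add_mul]; congr 1; omega
        calc (x * z - 1) * y + y = (x * z - 1) * y + 1 * y := by rw [one_mul]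
        _ = (x * z) * y := this
        _ = x * y * z := by ring
      omega
  · rintro ⟨⟨x1, x2, y1, y2⟩, h1, h2, h3, h4, h5, h6⟩
    replace h5 : x1 * y1 = x2 + 1 := h5
    apply Subtype.ext
    show (x1, x1 * y1 - 1, y1, y2) = (x1, x2, y1, y2)
    simp only [Prod.mk.injEq]
    exact ⟨trivial, by omega, trivial⟩
  · rintro ⟨⟨x, y, z⟩, h⟩
    rfl
end

section
/- There is a bijection between positive integer solutions (x1, x2, y1, y2) of the system x1*y1 = x2 + 1, x2*y2 = x1 + 1 and positive integer solutions (x, y, z) of x*y*z = x + y + 1, given by (x1, x2, y1, y2) ↦ (x1, y2, y1). -/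
/-!
A solution of the frieze system is determined by `(x₁, y₂, y₁)`, since `x₂ = x₁ y₁ - 1`.
Multiplying `x₁ y₁ = x₂ + 1` by `y₂` and substituting `x₂ y₂ = x₁ + 1` gives
`x₁ y₂ y₁ = x₁ + y₂ + 1`. Conversely, for `x y z = x + y + 1` put `x₂ := x z - 1`: then
`x₂ y = x y z - y = x + 1`, and `x₂` is positive because `x z ≤ 1` would force `x y z ≤ y`.
-/

theorem mul_mul_eq_add_add_one_of_frieze {R : Type*} [CommSemiring R] {x₁ x₂ y₁ y₂ : R}
    (h₁ : x₁ * y₁ = x₂ + 1) (h₂ : x₂ * y₂ = x₁ + 1) : x₁ * y₂ * y₁ = x₁ + y₂ + 1 :=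
  calc x₁ * y₂ * y₁ = x₁ * y₁ * y₂ := mul_right_comm _ _ _
    _ = x₂ * y₂ + y₂ := by rw [h₁, add_one_mul]
    _ = x₁ + y₂ + 1 := by rw [h₂, add_right_comm]

namespace Nat

variable {x y z : ℕ}

theorem one_lt_mul_of_mul_mul_eq_add_add_one (h : x * y * z = x + y + 1) : 1 < x * z := by
  by_contra! hxz
  have : x * y * z ≤ y :=
    calc x * y * z = x * z * y := mul_right_comm _ _ _
      _ ≤ 1 * y := Nat.mul_le_mul_right y hxz
      _ = y := one_mul y
  omega

theorem sub_one_mul_eq_of_mul_mul_eq_add_add_one (h : x * y * z = x + y + 1) :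
    (x * z - 1) * y = x + 1 := by
  rw [Nat.sub_one_mul, mul_right_comm, h]
  omega

end Nat

abbrev FriezeSolutions : Type :=
  {p : ℕ × ℕ × ℕ × ℕ // 0 < p.1 ∧ 0 < p.2.1 ∧ 0 < p.2.2.1 ∧ 0 < p.2.2.2 ∧
    p.1 * p.2.2.1 = p.2.1 + 1 ∧ p.2.1 * p.2.2.2 = p.1 + 1}

abbrev CubicSolutions : Type :=
  {q : ℕ × ℕ × ℕ // 0 < q.1 ∧ 0 < q.2.1 ∧ 0 < q.2.2 ∧ q.1 * q.2.1 * q.2.2 = q.1 + q.2.1 + 1}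

def FriezeSolutions.toCubic (p : FriezeSolutions) : CubicSolutions :=
  ⟨(p.1.1, p.1.2.2.2, p.1.2.2.1), by
    obtain ⟨_, hx₁, -, hy₁, hy₂, h₁, h₂⟩ := p
    exact ⟨hx₁, hy₂, hy₁, mul_mul_eq_add_add_one_of_frieze h₁ h₂⟩⟩

def CubicSolutions.toFrieze (q : CubicSolutions) : FriezeSolutions :=
  ⟨(q.1.1, q.1.1 * q.1.2.2 - 1, q.1.2.2, q.1.2.1), by
    obtain ⟨⟨x, y, z⟩, hx, hy, hz, h⟩ := q
    have hxz := Nat.one_lt_mul_of_mul_mul_eq_add_add_one h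
    exact ⟨hx, Nat.sub_pos_of_lt hxz, hz, hy, (Nat.sub_add_cancel hxz.le).symm,
      Nat.sub_one_mul_eq_of_mul_mul_eq_add_add_one h⟩⟩

def friezeEquivCubic : FriezeSolutions ≃ CubicSolutions where
  toFun := FriezeSolutions.toCubic
  invFun := CubicSolutions.toFrieze
  left_inv := by
    rintro ⟨⟨x₁, x₂, y₁, y₂⟩, -, -, -, -, h₁, -⟩
    ext <;> simp [FriezeSolutions.toCubic, CubicSolutions.toFrieze, h₁]
  right_inv _ := rfl

theorem stmt12 :
    ∃ e : {p : ℕ × ℕ × ℕ × ℕ // 0 < p.1 ∧ 0 < p.2.1 ∧ 0 < p.2.2.1 ∧ 0 < p.2.2.2 ∧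
        p.1 * p.2.2.1 = p.2.1 + 1 ∧ p.2.1 * p.2.2.2 = p.1 + 1} ≃
      {q : ℕ × ℕ × ℕ // 0 < q.1 ∧ 0 < q.2.1 ∧ 0 < q.2.2 ∧
        q.1 * q.2.1 * q.2.2 = q.1 + q.2.1 + 1},
      ∀ p, ((e p : ℕ × ℕ × ℕ)) = ((p : ℕ × ℕ × ℕ × ℕ).1,
        (p : ℕ × ℕ × ℕ × ℕ).2.2.2, (p : ℕ × ℕ × ℕ × ℕ).2.2.1) :=
  ⟨friezeEquivCubic, fun _ => rfl⟩
end

section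
/- Suppose positive integers x1,...,x8, y1,...,y8 satisfy the E8-frieze equations x1*y1 = x4+1, x2*y2 = x3+1, x3*y3 = x2+x4, x4*y4 = x1*x3+x5, x5*y5 = x4+x6, x6*y6 = x5+x7, x7*y7 = x6+x8, x8*y8 = x7+1. If x4 ≥ 2, y3 ≥ 2, y5 ≥ 2, y6 ≥ 2, and y7 ≥ 2, then xi ≤ x4 + 4 and yi ≤ x4 + 4 for all i ∈ {1,...,8}. -/
/-!
Each equation `x * y = c + d` of the frieze with `d ≤ x + 1` gives two bounds: `x ≤ c + 1` when
`y ≥ 2` (as `2x ≤ c + d`), and `y ≤ c + 2` always. Starting from `x₈ ≤ x₇ + 1` and `x₂ ≤ x₃ + 1`,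
the first bound propagates along the chain `x₈, x₇, x₆, x₅` and through `x₃` down to `x₄`, giving
`xᵢ ≤ x₄ + 1` around `x₄` and at most one more per step away from it; the second bound then
controls the `yᵢ`. Finally `x₄ y₄ = x₁ x₃ + x₅ ≤ (x₄ + 1)² + x₄ + 1 ≤ x₄ (x₄ + 4)` once `x₄ ≥ 2`.
-/

namespace Nat

theorem le_add_one_of_mul_eq_add {a b c d : ℕ} (h : a * b = c + d) (hb : 2 ≤ b)
    (hd : d ≤ a + 1) : a ≤ c + 1 := by
  have : a * 2 ≤ a * b := Nat.mul_le_mul_left a hb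
  omega

theorem le_add_two_of_mul_eq_add {a b c d : ℕ} (h : a * b = c + d) (ha : 0 < a)
    (hd : d ≤ a + 1) : b ≤ c + 2 := by
  refine Nat.le_of_mul_le_mul_left ?_ ha
  calc a * b = c + d := h
    _ ≤ a * c + a * 2 := by nlinarith
    _ = a * (c + 2) := by ring

theorem le_add_four_of_mul_eq_mul_add {a b u v w : ℕ} (h : a * b = u * v + w) (ha : 2 ≤ a)
    (hu : u ≤ a + 1) (hv : v ≤ a + 1) (hw : w ≤ a + 1) : b ≤ a + 4 := by
  refine Nat.le_of_mul_le_mul_left ?_ (by omega : 0 < a)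
  calc a * b = u * v + w := h
    _ ≤ (a + 1) * (a + 1) + (a + 1) := add_le_add (Nat.mul_le_mul hu hv) hw
    _ ≤ a * (a + 4) := by nlinarith

end Nat

theorem stmt13 (x1 x2 x3 x4 x5 x6 x7 x8 y1 y2 y3 y4 y5 y6 y7 y8 : ℕ)
    (hx : 0 < x1 ∧ 0 < x2 ∧ 0 < x3 ∧ 0 < x4 ∧ 0 < x5 ∧ 0 < x6 ∧ 0 < x7 ∧ 0 < x8)
    (hy : 0 < y1 ∧ 0 < y2 ∧ 0 < y3 ∧ 0 < y4 ∧ 0 < y5 ∧ 0 < y6 ∧ 0 < y7 ∧ 0 < y8)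
    (h1 : x1 * y1 = x4 + 1) (h2 : x2 * y2 = x3 + 1) (h3 : x3 * y3 = x2 + x4)
    (h4 : x4 * y4 = x1 * x3 + x5) (h5 : x5 * y5 = x4 + x6) (h6 : x6 * y6 = x5 + x7)
    (h7 : x7 * y7 = x6 + x8) (h8 : x8 * y8 = x7 + 1)
    (hx4 : 2 ≤ x4) (hy3 : 2 ≤ y3) (hy5 : 2 ≤ y5) (hy6 : 2 ≤ y6) (hy7 : 2 ≤ y7) :
    (x1 ≤ x4 + 4 ∧ x2 ≤ x4 + 4 ∧ x3 ≤ x4 + 4 ∧ x4 ≤ x4 + 4 ∧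
     x5 ≤ x4 + 4 ∧ x6 ≤ x4 + 4 ∧ x7 ≤ x4 + 4 ∧ x8 ≤ x4 + 4) ∧
    (y1 ≤ x4 + 4 ∧ y2 ≤ x4 + 4 ∧ y3 ≤ x4 + 4 ∧ y4 ≤ x4 + 4 ∧
     y5 ≤ x4 + 4 ∧ y6 ≤ x4 + 4 ∧ y7 ≤ x4 + 4 ∧ y8 ≤ x4 + 4) := by
  obtain ⟨px1, px2, px3, -, px5, px6, px7, px8⟩ := hx
  obtain ⟨py1, py2, -, -, -, -, -, py8⟩ := hy
  have hx1 : x1 ≤ x4 + 1 := h1 ▸ Nat.le_mul_of_pos_right x1 py1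
  have hy1 : y1 ≤ x4 + 1 := h1 ▸ Nat.le_mul_of_pos_left y1 px1
  have hx2 : x2 ≤ x3 + 1 := h2 ▸ Nat.le_mul_of_pos_right x2 py2
  have hy2 : y2 ≤ x3 + 1 := h2 ▸ Nat.le_mul_of_pos_left y2 px2
  have hx8 : x8 ≤ x7 + 1 := h8 ▸ Nat.le_mul_of_pos_right x8 py8
  have hy8 : y8 ≤ x7 + 1 := h8 ▸ Nat.le_mul_of_pos_left y8 px8
  have h3' : x3 * y3 = x4 + x2 := h3.trans (add_comm _ _)
  have hx3 := Nat.le_add_one_of_mul_eq_add h3' hy3 hx2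
  have hx7 := Nat.le_add_one_of_mul_eq_add h7 hy7 hx8
  have hx6 := Nat.le_add_one_of_mul_eq_add h6 hy6 hx7
  have hx5 := Nat.le_add_one_of_mul_eq_add h5 hy5 hx6
  have hy3' := Nat.le_add_two_of_mul_eq_add h3' px3 hx2
  have hy5' := Nat.le_add_two_of_mul_eq_add h5 px5 hx6
  have hy6' := Nat.le_add_two_of_mul_eq_add h6 px6 hx7
  have hy7' := Nat.le_add_two_of_mul_eq_add h7 px7 hx8
  have hy4 := Nat.le_add_four_of_mul_eq_mul_add h4 hx4 hx1 hx3 hx5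
  refine ⟨⟨?_, ?_, ?_, ?_, ?_, ?_, ?_, ?_⟩, ⟨?_, ?_, ?_, ?_, ?_, ?_, ?_, ?_⟩⟩ <;> omega
end

section
/- Suppose positive integers x1,...,x7, y1,...,y7 satisfy the E7-frieze equations x1*y1 = x4+1, x2*y2 = x3+1, x3*y3 = x2+x4, x4*y4 = x1*x3+x5, x5*y5 = x4+x6, x6*y6 = x5+x7, x7*y7 = x6+1, with y7 = 1. Then y6 ≥ 2, and the tuple (x1,...,x6, y1,...,y5, y6 - 1) satisfies the E6-frieze equations x1*y1 = x4+1, x2*y2 = x3+1, x3*y3 = x2+x4, x4*y4 = x1*x3+x5, x5*y5 = x4+x6, x6*y6' = x5+1 (with x7 = x6 + 1 determined). -/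
theorem Nat.two_le_and_mul_sub_one_eq {a b y : ℕ} (h : a * y = b + (a + 1)) :
    2 ≤ y ∧ a * (y - 1) = b + 1 := by
  have hsub : a * (y - 1) = b + 1 := by
    rw [Nat.mul_sub_one]
    omega
  refine ⟨?_, hsub⟩
  by_contra! hy
  rw [Nat.sub_eq_zero_of_le (by omega), mul_zero] at hsub
  omega

theorem stmt14_general (x1 x2 x3 x4 x5 x6 x7 y1 y2 y3 y4 y5 y6 y7 : ℕ)
    (h1 : x1 * y1 = x4 + 1) (h2 : x2 * y2 = x3 + 1) (h3 : x3 * y3 = x2 + x4)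
    (h4 : x4 * y4 = x1 * x3 + x5) (h5 : x5 * y5 = x4 + x6) (h6 : x6 * y6 = x5 + x7)
    (h7 : x7 * y7 = x6 + 1) (hy7 : y7 = 1) :
    2 ≤ y6 ∧
    x1 * y1 = x4 + 1 ∧ x2 * y2 = x3 + 1 ∧ x3 * y3 = x2 + x4 ∧
    x4 * y4 = x1 * x3 + x5 ∧ x5 * y5 = x4 + x6 ∧
    x6 * (y6 - 1) = x5 + 1 ∧ x7 = x6 + 1 := by
  rw [hy7, mul_one] at h7
  rw [h7] at h6
  obtain ⟨hy6, h6'⟩ := Nat.two_le_and_mul_sub_one_eq h6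
  exact ⟨hy6, h1, h2, h3, h4, h5, h6', h7⟩

theorem stmt14 (x1 x2 x3 x4 x5 x6 x7 y1 y2 y3 y4 y5 y6 y7 : ℕ)
    (hx : 0 < x1 ∧ 0 < x2 ∧ 0 < x3 ∧ 0 < x4 ∧ 0 < x5 ∧ 0 < x6 ∧ 0 < x7)
    (hy : 0 < y1 ∧ 0 < y2 ∧ 0 < y3 ∧ 0 < y4 ∧ 0 < y5 ∧ 0 < y6 ∧ 0 < y7)
    (h1 : x1 * y1 = x4 + 1) (h2 : x2 * y2 = x3 + 1) (h3 : x3 * y3 = x2 + x4)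
    (h4 : x4 * y4 = x1 * x3 + x5) (h5 : x5 * y5 = x4 + x6) (h6 : x6 * y6 = x5 + x7)
    (h7 : x7 * y7 = x6 + 1) (hy7 : y7 = 1) :
    2 ≤ y6 ∧
    x1 * y1 = x4 + 1 ∧ x2 * y2 = x3 + 1 ∧ x3 * y3 = x2 + x4 ∧
    x4 * y4 = x1 * x3 + x5 ∧ x5 * y5 = x4 + x6 ∧
    x6 * (y6 - 1) = x5 + 1 ∧ x7 = x6 + 1 :=
  stmt14_general x1 x2 x3 x4 x5 x6 x7 y1 y2 y3 y4 y5 y6 y7 h1 h2 h3 h4 h5 h6 h7 hy7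
end

section
/- There are infinitely many positive integer solutions (x, y, z) to the equation x*y*z = x^4 + y + 1. -/
/-!
The equation `x y z = x ^ n + y + 1` is the exchange relation of a rank-two cluster algebra, and it
admits a mutation `(x, y, z) ↦ (x', y', x)` with `x x' = y + 1` and `y y' = x' ^ n + 1`. Starting
from `(1, 2, 2)` and mutating repeatedly, the inequality `x ^ 2 < y` is preserved when `4 ≤ n`,
and it forces `x` to grow strictly, so the solutions are unbounded.
-/

theorem dvd_pow_add_one_of_mul_eq_add_one {R : Type*} [CommRing R] {n : ℕ} {x x' y : R}
    (hy : y ∣ x ^ n + 1) (h : x * x' = y + 1) : y ∣ x' ^ n + 1 := by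
  have key : x' ^ n + 1 = x' ^ n * (x ^ n + 1) - ((y + 1) ^ n - 1 ^ n) := by
    rw [← h]; ring
  rw [key]
  exact dvd_sub (dvd_mul_of_dvd_right hy _) (by simpa using sub_dvd_pow_sub_pow (y + 1) 1 n)

namespace ClusterEquation

variable {n x y z x' y' : ℕ}

theorem exists_mutation (hn : 0 < n) (h : x * y * z = x ^ n + y + 1) :
    ∃ x' y', x * x' = y + 1 ∧ y * y' = x' ^ n + 1 := by
  have hx : x ∣ y + 1 := by
    refine (Nat.dvd_add_right (dvd_pow_self x hn.ne')).mp ?_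
    rw [← add_assoc, ← h, mul_assoc]
    exact dvd_mul_right _ _
  obtain ⟨x', hx'⟩ := hx
  have hy : y ∣ x ^ n + 1 := by
    refine (Nat.dvd_add_left (dvd_refl y)).mp ?_
    rw [add_right_comm, ← h, mul_comm x y, mul_assoc]
    exact dvd_mul_right _ _
  have hy' : (y : ℤ) ∣ (x' : ℤ) ^ n + 1 :=
    dvd_pow_add_one_of_mul_eq_add_one (x := (x : ℤ)) (by exact_mod_cast hy)
      (by exact_mod_cast hx'.symm)
  obtain ⟨y', hy'⟩ := Int.natCast_dvd_natCast.mp (by exact_mod_cast hy')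
  exact ⟨x', y', hx'.symm, hy'.symm⟩

theorem mutation_eq (hxx' : x * x' = y + 1) (hyy' : y * y' = x' ^ n + 1) :
    x' * y' * x = x' ^ n + y' + 1 :=
  calc x' * y' * x = (x * x') * y' := by ring
    _ = y * y' + y' := by rw [hxx']; ring
    _ = x' ^ n + y' + 1 := by rw [hyy']; ring

theorem mutation_growth (hn : 4 ≤ n) (hxy : x ^ 2 < y) (hxx' : x * x' = y + 1)
    (hyy' : y * y' = x' ^ n + 1) : x < x' ∧ x' ^ 2 < y' := by
  have hlt : x < x' := by nlinarith
  have hyx' : y < x' ^ 2 := by nlinarith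
  have hpow : x' ^ 4 ≤ x' ^ n := Nat.pow_le_pow_right (by omega) hn
  refine ⟨hlt, Nat.lt_of_mul_lt_mul_left (a := y) ?_⟩
  calc y * x' ^ 2 < x' ^ 2 * x' ^ 2 := by gcongr; omega
    _ ≤ x' ^ n := by rw [← pow_add]; exact hpow
    _ < y * y' := by omega

theorem exists_solution_ge (hn : 4 ≤ n) (m : ℕ) :
    ∃ x y z, 0 < x ∧ x ^ 2 < y ∧ x * y * z = x ^ n + y + 1 ∧ m ≤ x := by
  induction m with
  | zero => exact ⟨1, 2, 2, by norm_num, by norm_num, by norm_num, Nat.zero_le 1⟩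
  | succ m ih =>
    obtain ⟨x, y, z, hx, hxy, h, hm⟩ := ih
    obtain ⟨x', y', hxx', hyy'⟩ := exists_mutation (by omega) h
    obtain ⟨hlt, hx'y'⟩ := mutation_growth hn hxy hxx' hyy'
    exact ⟨x', y', x, by omega, hx'y', mutation_eq hxx' hyy', by omega⟩

theorem setOf_solutions_infinite (hn : 4 ≤ n) :
    {p : ℕ × ℕ × ℕ | 0 < p.1 ∧ 0 < p.2.1 ∧ 0 < p.2.2 ∧
      p.1 * p.2.1 * p.2.2 = p.1 ^ n + p.2.1 + 1}.Infinite := by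
  refine .of_image Prod.fst (Set.infinite_of_forall_exists_gt fun m => ?_)
  obtain ⟨x, y, z, hx, hxy, h, hm⟩ := exists_solution_ge hn (m + 1)
  have hz : 0 < z := Nat.pos_of_ne_zero (by rintro rfl; simp at h)
  exact ⟨x, ⟨(x, y, z), ⟨hx, pos_of_gt hxy, hz, h⟩, rfl⟩, by omega⟩

end ClusterEquation

theorem stmt16 :
    {p : ℕ × ℕ × ℕ | 0 < p.1 ∧ 0 < p.2.1 ∧ 0 < p.2.2 ∧
      p.1 * p.2.1 * p.2.2 = p.1 ^ 4 + p.2.1 + 1}.Infinite :=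
  ClusterEquation.setOf_solutions_infinite le_rfl
end

section
/- For positive integers a, b, there is a bijection between positive integer solutions (x1, x2, y1, y2) of x1*y1 = x2^a + 1, x2*y2 = x1^b + 1 and positive integer solutions (x, y, z) of x*y^b*z = (x^a + 1)^b + y^b, given by x = x2, y = y1, z = y2, with x1 = (x2^a + 1)/y1. -/
/-!
Writing `c = x₂ ^ a + 1`, the first frieze equation says `x₁ = c / y₁`, and multiplying the second
one by `y₁ ^ b` turns it into `x₂ y₁ ^ b y₂ = c ^ b + y₁ ^ b`. Conversely, a solution of this
surface equation has `y₁ ^ b ∣ c ^ b`, hence `y₁ ∣ c`, so `x₁ := c / y₁` is an integer and dividing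
back by `y₁ ^ b` recovers the second frieze equation.
-/

def IsFriezeSolution (a b : ℕ) (p : ℕ × ℕ × ℕ × ℕ) : Prop :=
  0 < p.1 ∧ 0 < p.2.1 ∧ 0 < p.2.2.1 ∧ 0 < p.2.2.2 ∧
    p.1 * p.2.2.1 = p.2.1 ^ a + 1 ∧ p.2.1 * p.2.2.2 = p.1 ^ b + 1

def IsSurfaceSolution (a b : ℕ) (q : ℕ × ℕ × ℕ) : Prop :=
  0 < q.1 ∧ 0 < q.2.1 ∧ 0 < q.2.2 ∧ q.1 * q.2.1 ^ b * q.2.2 = (q.1 ^ a + 1) ^ b + q.2.1 ^ b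

theorem mul_pow_mul_eq_of_mul_eq {R : Type*} [CommSemiring R] {x₁ x₂ y₁ y₂ c : R} (b : ℕ)
    (h₁ : x₁ * y₁ = c) (h₂ : x₂ * y₂ = x₁ ^ b + 1) :
    x₂ * y₁ ^ b * y₂ = c ^ b + y₁ ^ b := by
  calc x₂ * y₁ ^ b * y₂ = y₁ ^ b * (x₂ * y₂) := by ring
    _ = (x₁ * y₁) ^ b + y₁ ^ b := by rw [h₂]; ring
    _ = c ^ b + y₁ ^ b := by rw [h₁]

namespace Nat

variable {x y z c b : ℕ}

theorem dvd_of_mul_pow_mul_eq (hb : b ≠ 0) (h : x * y ^ b * z = c ^ b + y ^ b) : y ∣ c := by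
  have hdvd : y ^ b ∣ c ^ b + y ^ b := h ▸ ⟨x * z, by ring⟩
  exact (Nat.pow_dvd_pow_iff hb).mp ((Nat.dvd_add_left (dvd_refl _)).mp hdvd)

theorem mul_eq_div_pow_add_one_of_mul_pow_mul_eq (hy : 0 < y) (hb : b ≠ 0)
    (h : x * y ^ b * z = c ^ b + y ^ b) : x * z = (c / y) ^ b + 1 := by
  obtain ⟨k, rfl⟩ := dvd_of_mul_pow_mul_eq hb h
  rw [Nat.mul_div_cancel_left k hy]
  refine Nat.eq_of_mul_eq_mul_left (pow_pos hy b) ?_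
  calc y ^ b * (x * z) = x * y ^ b * z := by ring
    _ = y ^ b * (k ^ b + 1) := by rw [h]; ring

end Nat

theorem IsFriezeSolution.isSurfaceSolution {a b : ℕ} {p : ℕ × ℕ × ℕ × ℕ}
    (hp : IsFriezeSolution a b p) : IsSurfaceSolution a b p.2 := by
  obtain ⟨-, hx₂, hy₁, hy₂, h₁, h₂⟩ := hp
  exact ⟨hx₂, hy₁, hy₂, mul_pow_mul_eq_of_mul_eq b h₁ h₂⟩

theorem IsSurfaceSolution.isFriezeSolution {a b : ℕ} (hb : b ≠ 0) {q : ℕ × ℕ × ℕ}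
    (hq : IsSurfaceSolution a b q) :
    IsFriezeSolution a b ((q.1 ^ a + 1) / q.2.1, q) := by
  obtain ⟨hx, hy, hz, h⟩ := hq
  have hdvd := Nat.dvd_of_mul_pow_mul_eq hb h
  refine ⟨Nat.div_pos (Nat.le_of_dvd (Nat.succ_pos _) hdvd) hy, hx, hy, hz,
    Nat.div_mul_cancel hdvd, Nat.mul_eq_div_pow_add_one_of_mul_pow_mul_eq hy hb h⟩

def friezeSurfaceEquiv (a : ℕ) {b : ℕ} (hb : b ≠ 0) :
    {p // IsFriezeSolution a b p} ≃ {q // IsSurfaceSolution a b q} where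
  toFun p := ⟨p.1.2, p.2.isSurfaceSolution⟩
  invFun q := ⟨((q.1.1 ^ a + 1) / q.1.2.1, q.1), q.2.isFriezeSolution hb⟩
  left_inv := by
    rintro ⟨⟨x₁, q⟩, hp⟩
    have hx₁ : (q.1 ^ a + 1) / q.2.1 = x₁ := Nat.div_eq_of_eq_mul_left hp.2.2.1 hp.2.2.2.2.1.symm
    simp only [hx₁]
  right_inv _ := rfl

theorem stmt17_general (a b : ℕ) (hb : 0 < b) :
    ∃ e : {p : ℕ × ℕ × ℕ × ℕ // 0 < p.1 ∧ 0 < p.2.1 ∧ 0 < p.2.2.1 ∧ 0 < p.2.2.2 ∧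
        p.1 * p.2.2.1 = p.2.1 ^ a + 1 ∧ p.2.1 * p.2.2.2 = p.1 ^ b + 1} ≃
      {q : ℕ × ℕ × ℕ // 0 < q.1 ∧ 0 < q.2.1 ∧ 0 < q.2.2 ∧
        q.1 * q.2.1 ^ b * q.2.2 = (q.1 ^ a + 1) ^ b + q.2.1 ^ b},
      ∀ p, ((e p : ℕ × ℕ × ℕ)) = ((p : ℕ × ℕ × ℕ × ℕ).2.1,
        (p : ℕ × ℕ × ℕ × ℕ).2.2.1, (p : ℕ × ℕ × ℕ × ℕ).2.2.2) :=
  ⟨friezeSurfaceEquiv a hb.ne', fun _ => rfl⟩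

theorem stmt17 (a b : ℕ) (ha : 0 < a) (hb : 0 < b) :
    ∃ e : {p : ℕ × ℕ × ℕ × ℕ // 0 < p.1 ∧ 0 < p.2.1 ∧ 0 < p.2.2.1 ∧ 0 < p.2.2.2 ∧
        p.1 * p.2.2.1 = p.2.1 ^ a + 1 ∧ p.2.1 * p.2.2.2 = p.1 ^ b + 1} ≃
      {q : ℕ × ℕ × ℕ // 0 < q.1 ∧ 0 < q.2.1 ∧ 0 < q.2.2 ∧
        q.1 * q.2.1 ^ b * q.2.2 = (q.1 ^ a + 1) ^ b + q.2.1 ^ b},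
      ∀ p, ((e p : ℕ × ℕ × ℕ)) = ((p : ℕ × ℕ × ℕ × ℕ).2.1,
        (p : ℕ × ℕ × ℕ × ℕ).2.2.1, (p : ℕ × ℕ × ℕ × ℕ).2.2.2) :=
  stmt17_general a b hb
end
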